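/- arXiv:1904.11782 — 8 statements merged into one kernel-verified Lean document; each statement's English description precedes it below -/
import Mathlib

section
/- For all positive integers m > n with gcd(m, n) = 1 and m ≢ n (mod 3), the triples (m² + mn + n², m² + 2mn, n² + 2mn) and (m² + mn + n², m² + 2mn, m² − n²) are primitive Eisensteinian triplets; that is, each has positive entries, satisfies a² = b² + c² − bc, and has gcd of its three entries equal to 1. -/
/-- A primitive Eisensteinian triplet: positive integers with
`a² = b² + c² − bc` and `gcd(a,b,c) = 1`. -/
def IsPrimitiveEisenstein (a b c : ℤ) : Prop :=
  0 < a ∧ 0 < b ∧ 0 < c ∧ a ^ 2 = b ^ 2 + c ^ 2 - b * c ∧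
    Int.gcd a (Int.gcd b c) = 1

/-!
The two triples share `a = m² + mn + n²` and `b = m(m + 2n)`, and the Eisenstein identity is a
polynomial identity, so everything reduces to `a` and `b` being coprime. Modulo `m` we have
`a ≡ n²`, and modulo `m + 2n` we have `a ≡ 3n²`; both are units since `m, n` are coprime and
`3 ∤ m + 2n ≡ m - n (mod 3)`.
-/

section CommRing

variable {R : Type*} [CommRing R] {m n : R}

theorem IsCoprime.sq_add_mul_add_sq_left (h : IsCoprime m n) :
    IsCoprime (m ^ 2 + m * n + n ^ 2) m := by
  have key : m ^ 2 + m * n + n ^ 2 = n ^ 2 + m * (m + n) := by ring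
  rw [key]
  exact h.symm.pow_left.add_mul_left_left _

theorem IsCoprime.sq_add_mul_add_sq_add_two_mul (h : IsCoprime m n) (h3 : IsCoprime 3 (m - n)) :
    IsCoprime (m ^ 2 + m * n + n ^ 2) (m + 2 * n) := by
  have h3' : IsCoprime 3 (m + 2 * n) := by
    have key : m + 2 * n = m - n + 3 * n := by ring
    rw [key]
    exact h3.add_mul_left_right n
  have hn : IsCoprime n (m + 2 * n) := by
    have key : m + 2 * n = m + n * 2 := by ring
    rw [key]
    exact h.symm.add_mul_left_right 2
  have key : m ^ 2 + m * n + n ^ 2 = 3 * n ^ 2 + (m + 2 * n) * (m - n) := by ring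
  rw [key]
  exact (h3'.mul_left hn.pow_left).add_mul_left_left _

theorem IsCoprime.sq_add_mul_add_sq_sq_add_two_mul_mul (h : IsCoprime m n)
    (h3 : IsCoprime 3 (m - n)) :
    IsCoprime (m ^ 2 + m * n + n ^ 2) (m ^ 2 + 2 * m * n) := by
  have key : m ^ 2 + 2 * m * n = m * (m + 2 * n) := by ring
  rw [key]
  exact h.sq_add_mul_add_sq_left.mul_right (h.sq_add_mul_add_sq_add_two_mul h3)

end CommRing

theorem Int.isCoprime_three_sub_of_not_modEq {m n : ℤ} (h : ¬ m ≡ n [ZMOD 3]) :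
    IsCoprime 3 (m - n) := by
  rw [Prime.coprime_iff_not_dvd Int.prime_three, ← dvd_neg, neg_sub, ← Int.modEq_iff_dvd]
  exact h

theorem isPrimitiveEisenstein_of_isCoprime {a b c : ℤ} (ha : 0 < a) (hb : 0 < b) (hc : 0 < c)
    (heq : a ^ 2 = b ^ 2 + c ^ 2 - b * c) (hab : IsCoprime a b) :
    IsPrimitiveEisenstein a b c :=
  ⟨ha, hb, hc, heq, Int.isCoprime_iff_gcd_eq_one.mp
    (hab.of_isCoprime_of_dvd_right (Int.gcd_dvd_left b c))⟩

/-- For positive coprime integers `m > n` with `m ≢ n (mod 3)`, both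
triples of Gilder's parametrization are primitive Eisensteinian triplets. -/
theorem gilder_param_isPrimitiveEisenstein (m n : ℤ) (hn : 0 < n) (hnm : n < m)
    (hg : Int.gcd m n = 1) (h3 : ¬ m ≡ n [ZMOD 3]) :
    IsPrimitiveEisenstein (m ^ 2 + m * n + n ^ 2) (m ^ 2 + 2 * m * n) (n ^ 2 + 2 * m * n) ∧
    IsPrimitiveEisenstein (m ^ 2 + m * n + n ^ 2) (m ^ 2 + 2 * m * n) (m ^ 2 - n ^ 2) := by
  have hm : 0 < m := hn.trans hnm
  have hab := (Int.isCoprime_iff_gcd_eq_one.mpr hg).sq_add_mul_add_sq_sq_add_two_mul_mul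
    (Int.isCoprime_three_sub_of_not_modEq h3)
  have ha : 0 < m ^ 2 + m * n + n ^ 2 := by positivity
  have hb : 0 < m ^ 2 + 2 * m * n := by positivity
  exact ⟨isPrimitiveEisenstein_of_isCoprime ha hb (by positivity) (by ring) hab,
    isPrimitiveEisenstein_of_isCoprime ha hb (by nlinarith) (by ring) hab⟩
end

section
/- Every primitive Eisensteinian triplet (a, b, c) with b > c and (a, b, c) ≠ (1, 1, 1) is of the form a = m² + mn + n², b = m² + 2mn, and c = n² + 2mn or c = m² − n², for some positive integers m > n > 0 with gcd(m, n) = 1 and m ≢ n (mod 3). -/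
theorem IsPrimitiveEisenstein.isCoprime {a b c : ℤ} (h : IsPrimitiveEisenstein a b c) :
    IsCoprime b c := by
  obtain ⟨-, -, -, heq, hgcd⟩ := h
  rw [Int.isCoprime_iff_gcd_eq_one]
  have hgb : (Int.gcd b c : ℤ) ∣ b := Int.gcd_dvd_left b c
  have hgc : (Int.gcd b c : ℤ) ∣ c := Int.gcd_dvd_right b c
  have hga : (Int.gcd b c : ℤ) ∣ a := by
    rw [← Int.pow_dvd_pow_iff two_ne_zero, heq]
    exact dvd_sub (dvd_add (pow_dvd_pow_of_dvd hgb 2) (pow_dvd_pow_of_dvd hgc 2))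
      (sq (Int.gcd b c : ℤ) ▸ mul_dvd_mul hgb hgc)
  have hg1 : (Int.gcd b c : ℤ) ∣ (1 : ℕ) := hgcd ▸ Int.dvd_coe_gcd hga dvd_rfl
  exact Nat.dvd_one.mp (Int.natCast_dvd_natCast.mp hg1)

theorem Int.exists_pos_sq_of_isCoprime_of_mul_eq_sq {r s u : ℤ} (hrs : IsCoprime r s)
    (hr : 0 < r) (hu : 0 < u) (h : r * s = u ^ 2) :
    ∃ e f : ℤ, 0 < e ∧ 0 < f ∧ r = e ^ 2 ∧ s = f ^ 2 ∧ u = e * f := by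
  have hs : 0 < s := pos_of_mul_pos_right (h ▸ pow_pos hu 2) hr.le
  obtain ⟨e, he⟩ := Int.sq_of_isCoprime hrs h
  obtain ⟨f, hf⟩ := Int.sq_of_isCoprime hrs.symm ((mul_comm s r).trans h)
  replace he : r = |e| ^ 2 := by
    rcases he with he | he <;> [rw [sq_abs, he]; nlinarith [sq_nonneg e]]
  replace hf : s = |f| ^ 2 := by
    rcases hf with hf | hf <;> [rw [sq_abs, hf]; nlinarith [sq_nonneg f]]
  refine ⟨|e|, |f|, by nlinarith [abs_nonneg e], by nlinarith [abs_nonneg f], he, hf, ?_⟩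
  rw [he, hf, ← mul_pow] at h
  exact (sq_eq_sq₀ hu.le (by positivity)).mp h.symm

theorem isCoprime_of_mul_eq_three_mul_sq {r s u v : ℤ} (huv : IsCoprime u v) (hr : Odd r)
    (hrs : r * s = 3 * u ^ 2) (hsr : s - r = 2 * u + 4 * v) : IsCoprime r s := by
  refine isCoprime_of_prime_dvd (fun h ↦ by obtain ⟨k, hk⟩ := hr; omega)
    fun p hp hpr hps ↦ ?_
  -- `p² ∣ 3u²` and `3` is squarefree
  have hpu : p ∣ u := by
    by_contra hpu
    have hcop : IsCoprime (p * p) (u ^ 2) := by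
      rw [← sq]; exact ((Prime.coprime_iff_not_dvd hp).2 hpu).pow
    exact hp.not_isUnit (Int.prime_three.squarefree p
      (hcop.dvd_of_dvd_mul_right (hrs ▸ mul_dvd_mul hpr hps)))
  have hp2 : ¬ p ∣ 2 := fun hp2 ↦ by
    obtain ⟨k, rfl⟩ := hr
    exact hp.not_isUnit (isUnit_of_dvd_one ((dvd_add_right (hp2.mul_right k)).mp hpr))
  have hpv : p ∣ v := by
    have h4v : p ∣ 2 ^ 2 * v := by
      rw [show 2 ^ 2 * v = s - r - 2 * u by rw [hsr]; ring]
      exact dvd_sub (dvd_sub hps hpr) (hpu.mul_left 2)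
    exact (hp.dvd_or_dvd h4v).resolve_left fun h ↦ hp2 (hp.dvd_of_dvd_pow h)
  exact hp.not_isUnit (huv.isUnit_of_dvd' hpu hpv)

theorem exists_signed_params_of_three_dvd {a u v : ℤ} (ha : 0 < a) (hu : 0 < u) (hodd : Odd u)
    (huv : IsCoprime u v) (h : a ^ 2 = u ^ 2 + u * v + v ^ 2) (h3 : 3 ∣ 2 * a - u - 2 * v) :
    ∃ m n : ℤ, 0 < n ∧ 0 < 2 * m + n ∧ IsCoprime m n ∧ ¬ m ≡ n [ZMOD 3] ∧
      a = m ^ 2 + m * n + n ^ 2 ∧ u = n ^ 2 + 2 * m * n ∧ v = m ^ 2 - n ^ 2 := by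
  obtain ⟨k, hk⟩ := h3
  have hrs : 3 * k * (2 * a + u + 2 * v) = 3 * u ^ 2 := by rw [← hk]; linear_combination 4 * h
  have hs : 0 < 2 * a + u + 2 * v := by nlinarith
  have hk_pos : 0 < k := by nlinarith
  have hr_odd : Odd (3 * k) := by
    obtain ⟨j, hj⟩ := hodd
    exact ⟨a - v - j - 1, by rw [← hk, hj]; ring⟩
  have hcop := isCoprime_of_mul_eq_three_mul_sq huv hr_odd hrs (by linear_combination hk)
  obtain ⟨e, f, he, hf, rfl, hsf, rfl⟩ :=
    Int.exists_pos_sq_of_isCoprime_of_mul_eq_sq hcop.of_mul_left_right hk_pos hu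
      (by linarith)
  rw [hsf] at hcop
  obtain ⟨he_odd, hf_odd⟩ := Int.odd_mul.mp hodd
  have hef : IsCoprime e f := (IsCoprime.pow_iff two_pos two_pos).mp hcop.of_mul_left_right
  have h3f : ¬ 3 ∣ f := fun h3f ↦ Int.prime_three.not_isUnit
    (hcop.isUnit_of_dvd' (dvd_mul_right 3 _) (dvd_pow h3f two_ne_zero))
  obtain ⟨m, hm⟩ := hf_odd.sub_odd he_odd
  obtain rfl : f = 2 * m + e := by linarith
  refine ⟨m, e, he, hf, ?_, ?_, by linarith, by ring, by linarith⟩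
  · obtain ⟨x, y, hxy⟩ := hef
    exact ⟨2 * y, x + y, by linear_combination hxy⟩
  · intro hme
    apply h3f
    unfold Int.ModEq at hme
    omega

theorem exists_gilder_params_of_odd {a u v : ℤ} (ha : 0 < a) (hu : 0 < u) (hv : 0 < v)
    (hodd : Odd u) (huv : IsCoprime u v) (h : a ^ 2 = u ^ 2 + u * v + v ^ 2) :
    ∃ m n : ℤ, 0 < n ∧ n < m ∧ IsCoprime m n ∧ ¬ m ≡ n [ZMOD 3] ∧ a = m ^ 2 + m * n + n ^ 2 ∧
      (u = m ^ 2 - n ^ 2 ∧ v = n ^ 2 + 2 * m * n ∨ u = n ^ 2 + 2 * m * n ∧ v = m ^ 2 - n ^ 2) := by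
  have hrs : (2 * a - u - 2 * v) * (2 * a + u + 2 * v) = 3 * u ^ 2 := by
    linear_combination 4 * h
  rcases Int.prime_three.dvd_mul.mp (Dvd.intro _ hrs.symm) with h3 | h3
  · obtain ⟨m, n, hn, h2mn, hcop, hmod, rfl, rfl, rfl⟩ :=
      exists_signed_params_of_three_dvd ha hu hodd huv h h3
    exact ⟨m, n, hn, by nlinarith, hcop, hmod, rfl, Or.inr ⟨rfl, rfl⟩⟩
  · -- `(u, -u - v)` is a solution whose `r` is the `s` of `(u, v)`
    have huw : IsCoprime u (-u - v) := by
      obtain ⟨x, y, hxy⟩ := huv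
      exact ⟨x - y, -y, by linear_combination hxy⟩
    obtain ⟨m, n, hn, h2mn, hcop, hmod, rfl, rfl, hw⟩ :=
      exists_signed_params_of_three_dvd ha hu hodd huw (by linear_combination h)
        (by rwa [show 2 * a - u - 2 * (-u - v) = 2 * a + u + 2 * v by ring])
    refine ⟨m + n, -m, by nlinarith, by linarith, ?_, ?_, by ring,
      Or.inl ⟨by ring, by linear_combination -hw⟩⟩
    · obtain ⟨x, y, hxy⟩ := hcop
      exact ⟨y, y - x, by linear_combination hxy⟩
    · intro hmod'
      apply hmod
      unfold Int.ModEq at hmod' ⊢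
      omega

theorem exists_gilder_params {a u v : ℤ} (ha : 0 < a) (hu : 0 < u) (hv : 0 < v)
    (huv : IsCoprime u v) (h : a ^ 2 = u ^ 2 + u * v + v ^ 2) :
    ∃ m n : ℤ, 0 < n ∧ n < m ∧ IsCoprime m n ∧ ¬ m ≡ n [ZMOD 3] ∧ a = m ^ 2 + m * n + n ^ 2 ∧
      (u = m ^ 2 - n ^ 2 ∧ v = n ^ 2 + 2 * m * n ∨ u = n ^ 2 + 2 * m * n ∧ v = m ^ 2 - n ^ 2) := by
  rcases Int.even_or_odd u with hu_even | hu_odd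
  · have hv_odd : Odd v := Int.not_even_iff_odd.mp fun hv_even ↦
      Int.prime_two.not_isUnit (huv.isUnit_of_dvd' hu_even.two_dvd hv_even.two_dvd)
    obtain ⟨m, n, hn, hnm, hcop, hmod, ha, hvu⟩ :=
      exists_gilder_params_of_odd ha hv hu hv_odd huv.symm (by linear_combination h)
    exact ⟨m, n, hn, hnm, hcop, hmod, ha, hvu.symm.imp And.symm And.symm⟩
  · exact exists_gilder_params_of_odd ha hu hv hu_odd huv h

theorem gilder_param_complete_general (a b c : ℤ) (h : IsPrimitiveEisenstein a b c)
    (hbc : b > c) :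
    ∃ m n : ℤ, 0 < n ∧ n < m ∧ Int.gcd m n = 1 ∧ ¬ m ≡ n [ZMOD 3] ∧
      a = m ^ 2 + m * n + n ^ 2 ∧ b = m ^ 2 + 2 * m * n ∧
      (c = n ^ 2 + 2 * m * n ∨ c = m ^ 2 - n ^ 2) := by
  have huv : IsCoprime (b - c) c := by
    obtain ⟨x, y, hxy⟩ := h.isCoprime
    exact ⟨x, x + y, by linear_combination hxy⟩
  obtain ⟨ha, -, hc, heq, -⟩ := h
  obtain ⟨m, n, hn, hnm, hcop, hmod, rfl, hbc'⟩ :=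
    exists_gilder_params ha (sub_pos.mpr hbc) hc huv (by linear_combination heq)
  refine ⟨m, n, hn, hnm, Int.isCoprime_iff_gcd_eq_one.mp hcop, hmod, rfl, ?_⟩
  rcases hbc' with ⟨hb, rfl⟩ | ⟨hb, rfl⟩
  · exact ⟨by linear_combination hb, Or.inl rfl⟩
  · exact ⟨by linear_combination hb, Or.inr rfl⟩

/-- Gilder, completeness: every primitive Eisensteinian triplet
`(a,b,c)` with `b > c` other than `(1,1,1)` arises from the parametrization
`a = m² + mn + n²`, `b = m² + 2mn`, `c = n² + 2mn` or `c = m² − n²`, with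
`m > n > 0`, `gcd(m,n) = 1`, `m ≢ n (mod 3)`. -/
theorem gilder_param_complete (a b c : ℤ) (h : IsPrimitiveEisenstein a b c)
    (hbc : b > c) (hne : (a, b, c) ≠ (1, 1, 1)) :
    ∃ m n : ℤ, 0 < n ∧ n < m ∧ Int.gcd m n = 1 ∧ ¬ m ≡ n [ZMOD 3] ∧
      a = m ^ 2 + m * n + n ^ 2 ∧ b = m ^ 2 + 2 * m * n ∧
      (c = n ^ 2 + 2 * m * n ∨ c = m ^ 2 - n ^ 2) :=
  gilder_param_complete_general a b c h hbc
end

section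
/- The parametrization of non-equilateral primitive Eisensteinian triplets is injective: if (m, n) and (m', n') are pairs of positive integers with m > n > 0, m' > n' > 0, gcd(m,n) = gcd(m',n') = 1, m ≢ n (mod 3), m' ≢ n' (mod 3), and the unordered pair of triples {(m²+mn+n², m²+2mn, n²+2mn), (m²+mn+n², m²+2mn, m²−n²)} equals the corresponding pair for (m', n'), then (m, n) = (m', n'). -/
/-!
The triples of `(m, n)` and `(m', n')` share their first two entries, so the two unordered
pairs either match componentwise or crosswise. Componentwise, `b + c - a = 3mn` and
`b - 2mn = m²` recover `mn` and `m²`, hence `(m, n)` for `m > 0`. Crosswise, the third entries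
give `m'² = n'² + n² + 2mn` and `m² = n² + n'² + 2m'n'`, which have no solution modulo 4 unless
`m` and `n` are both even, contradicting `gcd(m, n) = 1`.
-/

lemma ZMod.two_mul_eq_zero_of_sq_eq_add_of_sq_eq_add : ∀ m n m' n' : ZMod 4,
    m' ^ 2 = n' ^ 2 + n ^ 2 + 2 * m * n → m ^ 2 = n ^ 2 + n' ^ 2 + 2 * m' * n' →
    2 * m = 0 ∧ 2 * n = 0 := by
  decide

lemma Int.two_dvd_of_two_mul_cast_zmod_four_eq_zero {m : ℤ} (h : 2 * (m : ZMod 4) = 0) :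
    2 ∣ m := by
  have h4 : ((4 : ℕ) : ℤ) ∣ 2 * m :=
    (ZMod.intCast_zmod_eq_zero_iff_dvd (2 * m) 4).mp (by push_cast; exact h)
  omega

lemma Int.two_dvd_of_sq_eq_add_of_sq_eq_add {m n m' n' : ℤ}
    (h₁ : m' ^ 2 = n' ^ 2 + n ^ 2 + 2 * m * n) (h₂ : m ^ 2 = n ^ 2 + n' ^ 2 + 2 * m' * n') :
    2 ∣ m ∧ 2 ∣ n := by
  obtain ⟨hm, hn⟩ := ZMod.two_mul_eq_zero_of_sq_eq_add_of_sq_eq_add m n m' n'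
    (by exact_mod_cast congrArg (Int.cast : ℤ → ZMod 4) h₁)
    (by exact_mod_cast congrArg (Int.cast : ℤ → ZMod 4) h₂)
  exact ⟨Int.two_dvd_of_two_mul_cast_zmod_four_eq_zero hm,
    Int.two_dvd_of_two_mul_cast_zmod_four_eq_zero hn⟩

lemma Int.gcd_ne_one_of_sq_eq_add_of_sq_eq_add {m n m' n' : ℤ}
    (h₁ : m' ^ 2 = n' ^ 2 + n ^ 2 + 2 * m * n) (h₂ : m ^ 2 = n ^ 2 + n' ^ 2 + 2 * m' * n') :
    Int.gcd m n ≠ 1 := by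
  intro hg
  obtain ⟨hm, hn⟩ := Int.two_dvd_of_sq_eq_add_of_sq_eq_add h₁ h₂
  have : 2 ∣ Int.gcd m n := Int.dvd_gcd (c := 2) hm hn
  omega

lemma eq_of_eisenstein_param_eq {m n m' n' : ℤ} (hm : 0 ≤ m) (hm' : 0 < m')
    (ha : m ^ 2 + m * n + n ^ 2 = m' ^ 2 + m' * n' + n' ^ 2)
    (hb : m ^ 2 + 2 * m * n = m' ^ 2 + 2 * m' * n')
    (hc : n ^ 2 + 2 * m * n = n' ^ 2 + 2 * m' * n') :
    m = m' ∧ n = n' := by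
  have hmn : m * n = m' * n' :=
    mul_left_cancel₀ three_ne_zero (by linear_combination hb + hc - ha : 3 * (m * n) = 3 * (m' * n'))
  have hm_sq : m ^ 2 = m' ^ 2 := by linear_combination hb - 2 * hmn
  have hm_eq : m = m' := (sq_eq_sq₀ hm hm'.le).mp hm_sq
  subst hm_eq
  exact ⟨rfl, mul_left_cancel₀ hm'.ne' hmn⟩

theorem gilder_param_injective_general (m n m' n' : ℤ)
    (hn : 0 < n) (hnm : n < m) (hn' : 0 < n') (hnm' : n' < m')
    (hg : Int.gcd m n = 1)
    (h : ({(m ^ 2 + m * n + n ^ 2, m ^ 2 + 2 * m * n, n ^ 2 + 2 * m * n),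
           (m ^ 2 + m * n + n ^ 2, m ^ 2 + 2 * m * n, m ^ 2 - n ^ 2)} : Set (ℤ × ℤ × ℤ)) =
         {(m' ^ 2 + m' * n' + n' ^ 2, m' ^ 2 + 2 * m' * n', n' ^ 2 + 2 * m' * n'),
          (m' ^ 2 + m' * n' + n' ^ 2, m' ^ 2 + 2 * m' * n', m' ^ 2 - n' ^ 2)}) :
    m = m' ∧ n = n' := by
  rw [Set.pair_eq_pair_iff] at h
  simp only [Prod.mk.injEq] at h
  rcases h with ⟨⟨ha, hb, hc⟩, -⟩ | ⟨⟨-, -, hc⟩, -, -, hc'⟩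
  · exact eq_of_eisenstein_param_eq (by omega) (by omega) ha hb hc
  · have h₁ : m' ^ 2 = n' ^ 2 + n ^ 2 + 2 * m * n := by linear_combination -hc
    have h₂ : m ^ 2 = n ^ 2 + n' ^ 2 + 2 * m' * n' := by linear_combination hc'
    exact absurd hg (Int.gcd_ne_one_of_sq_eq_add_of_sq_eq_add h₁ h₂)

/-- Gilder, injectivity: if two admissible parameter pairs `(m,n)`
and `(m',n')` produce the same unordered pair of triples, then `(m,n) = (m',n')`. -/
theorem gilder_param_injective (m n m' n' : ℤ)
    (hn : 0 < n) (hnm : n < m) (hn' : 0 < n') (hnm' : n' < m')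
    (hg : Int.gcd m n = 1) (hg' : Int.gcd m' n' = 1)
    (h3 : ¬ m ≡ n [ZMOD 3]) (h3' : ¬ m' ≡ n' [ZMOD 3])
    (h : ({(m ^ 2 + m * n + n ^ 2, m ^ 2 + 2 * m * n, n ^ 2 + 2 * m * n),
           (m ^ 2 + m * n + n ^ 2, m ^ 2 + 2 * m * n, m ^ 2 - n ^ 2)} : Set (ℤ × ℤ × ℤ)) =
         {(m' ^ 2 + m' * n' + n' ^ 2, m' ^ 2 + 2 * m' * n', n' ^ 2 + 2 * m' * n'),
          (m' ^ 2 + m' * n' + n' ^ 2, m' ^ 2 + 2 * m' * n', m' ^ 2 - n' ^ 2)}) :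
    m = m' ∧ n = n' :=
  gilder_param_injective_general m n m' n' hn hnm hn' hnm' hg h
end

section
/- Let S = [[1,0],[1,1]], A₁ = [[1,0],[3,1]], A₂ = [[0,1],[1,3]], A₃ = [[1,1],[2,3]], A₄ = [[1,1],[3,2]], A₅ = [[0,1],[−1,2]]. Every pair of coprime integers (n, m) with 0 < n < m and n ≢ m (mod 3) can be written in exactly one way as (∏_{i=1}^{k} A_{α_i}) · Sᵉ · (1,2)ᵗ = (n,m)ᵗ, where k ≥ 0, each α_i ∈ {1,2,3,4,5}, and ε ∈ {0,1}. -/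
open Matrix

/-- The five matrices `A₁, …, A₅` generating the modified Stern–Brocot tree. -/
def Amat : Fin 5 → Matrix (Fin 2) (Fin 2) ℤ
  | 0 => !![1, 0; 3, 1]
  | 1 => !![0, 1; 1, 3]
  | 2 => !![1, 1; 2, 3]
  | 3 => !![1, 1; 3, 2]
  | 4 => !![0, 1; -1, 2]

/-- The matrix `S`. -/
def Smat : Matrix (Fin 2) (Fin 2) ℤ := !![1, 0; 1, 1]

def step (i : Fin 5) (a b : ℤ) : ℤ × ℤ :=
  if i.val = 0 then (a, 3*a + b)
  else if i.val = 1 then (b, a + 3*b)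
  else if i.val = 2 then (a + b, 2*a + 3*b)
  else if i.val = 3 then (a + b, 3*a + 2*b)
  else (b, 2*b - a)

lemma step_zero (a b : ℤ) : step 0 a b = (a, 3*a + b) := rfl
lemma step_one (a b : ℤ) : step 1 a b = (b, a + 3*b) := rfl
lemma step_two (a b : ℤ) : step 2 a b = (a + b, 2*a + 3*b) := rfl
lemma step_three (a b : ℤ) : step 3 a b = (a + b, 3*a + 2*b) := rfl
lemma step_four (a b : ℤ) : step 4 a b = (b, 2*b - a) := rfl

def Valid (a b : ℤ) : Prop := 0 < a ∧ a < b ∧ IsCoprime a b ∧ ¬ (3 ∣ b - a)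

def val (p : List (Fin 5) × Bool) : Fin 2 → ℤ :=
  ((p.1.map Amat).prod * Smat ^ (cond p.2 1 0)).mulVec ![1, 2]

lemma mulVec_Amat (i : Fin 5) (v : Fin 2 → ℤ) :
    (Amat i).mulVec v = ![(step i (v 0) (v 1)).1, (step i (v 0) (v 1)).2] := by
  fin_cases i <;> funext j <;> fin_cases j <;>
    simp [Amat, step, Matrix.mulVec, dotProduct, Fin.sum_univ_two] <;> ring

lemma val_nil (ε : Bool) : val ([], ε) = ![1, cond ε 3 2] := by
  cases ε <;> funext j <;> fin_cases j <;>
    simp [val, Smat, Matrix.mulVec, dotProduct, Fin.sum_univ_two]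

lemma val_cons (i : Fin 5) (t : List (Fin 5)) (ε : Bool) :
    val (i :: t, ε) = (Amat i).mulVec (val (t, ε)) := by
  simp [val, List.map_cons, List.prod_cons, mul_assoc, ← Matrix.mulVec_mulVec]

lemma step_valid (i : Fin 5) {a b : ℤ} (h : Valid a b) :
    Valid (step i a b).1 (step i a b).2 := by
  obtain ⟨h1, h2, ⟨u, v, huv⟩, h3⟩ := h
  fin_cases i <;> simp only [step] <;> norm_num <;>
  refine ⟨by omega, by omega, ?_, by omega⟩
  · exact ⟨u - 3*v, v, by linear_combination huv⟩
  · exact ⟨v - 3*u, u, by linear_combination huv⟩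
  · exact ⟨3*u - 2*v, v - u, by linear_combination huv⟩
  · exact ⟨3*v - 2*u, u - v, by linear_combination huv⟩
  · exact ⟨v + 2*u, -u, by linear_combination huv⟩

lemma step_inj {i j : Fin 5} {a b a' b' : ℤ} (h1 : 0 < a) (h2 : a < b)
    (h1' : 0 < a') (h2' : a' < b') (he : step i a b = step j a' b') :
    i = j ∧ a = a' ∧ b = b' := by
  fin_cases i <;> fin_cases j <;> simp [step, Prod.ext_iff] at he ⊢ <;> omega

lemma step_ne_base (i : Fin 5) {a b : ℤ} (h1 : 0 < a) (h2 : a < b) :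
    step i a b ≠ (1, 2) ∧ step i a b ≠ (1, 3) := by
  fin_cases i <;> simp [step, Prod.ext_iff] <;> omega

lemma val_valid (l : List (Fin 5)) (ε : Bool) : Valid (val (l, ε) 0) (val (l, ε) 1) := by
  induction l with
  | nil =>
      have h0 := congrFun (val_nil ε) 0
      have h1 := congrFun (val_nil ε) 1
      simp only [Matrix.cons_val_zero, Matrix.cons_val_one, Matrix.head_cons] at h0 h1
      rw [h0, h1]
      cases ε <;> exact ⟨by decide, by decide, isCoprime_one_left, by decide⟩
  | cons i t ih =>
      rw [val_cons, mulVec_Amat]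
      simpa using step_valid i ih

lemma exists_step {n m : ℤ} (h1 : 0 < n) (h2 : n < m) (hc : IsCoprime n m)
    (h3 : ¬ (3 ∣ m - n)) (hb2 : ¬(n = 1 ∧ m = 2)) (hb3 : ¬(n = 1 ∧ m = 3)) :
    ∃ i a b, step i a b = (n, m) ∧ Valid a b ∧ b < m := by
  obtain ⟨u, v, huv⟩ := hc
  have hn1 : ∀ k : ℤ, m = k * n → n = 1 := by
    intro k hk
    have hdvd : n ∣ 1 := ⟨u + v * k, by linear_combination -huv + v * hk⟩
    have := Int.le_of_dvd one_pos hdvd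
    omega
  rcases lt_trichotomy m (2*n) with h|h|h
  · exact ⟨4, 2*n - m, n, by rw [step_four, Prod.mk.injEq]; omega, ⟨by omega, by omega,
      ⟨-v, u + 2*v, by linear_combination huv⟩, by omega⟩, by omega⟩
  · have hn := hn1 2 (by omega); exact absurd ⟨hn, by omega⟩ hb2
  rcases lt_trichotomy (2*m) (5*n) with h5|h5|h5
  · exact ⟨3, m - 2*n, 3*n - m, by rw [step_three, Prod.mk.injEq]; omega, ⟨by omega, by omega,
      ⟨u + 3*v, u + 2*v, by linear_combination huv⟩, by omega⟩, by omega⟩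
  · exfalso; omega
  rcases lt_trichotomy m (3*n) with h6|h6|h6
  · exact ⟨2, 3*n - m, m - 2*n, by rw [step_two, Prod.mk.injEq]; omega, ⟨by omega, by omega,
      ⟨u + 2*v, u + 3*v, by linear_combination huv⟩, by omega⟩, by omega⟩
  · have hn := hn1 3 (by omega); exact absurd ⟨hn, by omega⟩ hb3
  rcases lt_trichotomy m (4*n) with h7|h7|h7
  · exact ⟨1, m - 3*n, n, by rw [step_one, Prod.mk.injEq]; omega, ⟨by omega, by omega,
      ⟨v, u + 3*v, by linear_combination huv⟩, by omega⟩, by omega⟩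
  · exfalso; omega
  · exact ⟨0, n, m - 3*n, by rw [step_zero, Prod.mk.injEq]; omega, ⟨by omega, by omega,
      ⟨u + 3*v, v, by linear_combination huv⟩, by omega⟩, by omega⟩

lemma main_lemma : ∀ (N : ℕ) (n m : ℤ), m ≤ N → Valid n m →
    ∃! p : List (Fin 5) × Bool, val p = ![n, m] := by
  intro N
  induction N with
  | zero =>
      rintro n m hm ⟨hh1, hh2, -, -⟩
      exfalso; omega
  | succ N ih =>
      rintro n m hm ⟨h1, h2, hc, h3⟩
      by_cases hb2 : n = 1 ∧ m = 2
      · obtain ⟨rfl, rfl⟩ := hb2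
        refine ⟨([], false), show val ([], false) = ![1,2] by rw [val_nil]; rfl, ?_⟩
        rintro ⟨l, ε⟩ hr
        replace hr : val (l, ε) = ![1, 2] := hr
        cases l with
        | nil =>
            rw [val_nil] at hr
            have e1 := congrFun hr 1
            simp at e1
            cases ε
            · rfl
            · simp at e1
        | cons j t =>
            exfalso
            rw [val_cons, mulVec_Amat] at hr
            have hvt := val_valid t ε
            have e0 := congrFun hr 0
            have e1 := congrFun hr 1
            simp at e0 e1
            exact (step_ne_base j hvt.1 hvt.2.1).1 (Prod.ext_iff.mpr ⟨e0, e1⟩)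
      · by_cases hb3 : n = 1 ∧ m = 3
        · obtain ⟨rfl, rfl⟩ := hb3
          refine ⟨([], true), show val ([], true) = ![1,3] by rw [val_nil]; rfl, ?_⟩
          rintro ⟨l, ε⟩ hr
          replace hr : val (l, ε) = ![1, 3] := hr
          cases l with
          | nil =>
              rw [val_nil] at hr
              have e1 := congrFun hr 1
              simp at e1
              cases ε
              · simp at e1
              · rfl
          | cons j t =>
              exfalso
              rw [val_cons, mulVec_Amat] at hr
              have hvt := val_valid t ε
              have e0 := congrFun hr 0
              have e1 := congrFun hr 1
              simp at e0 e1
              exact (step_ne_base j hvt.1 hvt.2.1).2 (Prod.ext_iff.mpr ⟨e0, e1⟩)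
        · obtain ⟨i, a, b, hstep, hva, hlt⟩ := exists_step h1 h2 hc h3 hb2 hb3
          obtain ⟨⟨q1, q2⟩, hq, hq'⟩ := ih a b (by omega) hva
          refine ⟨(i :: q1, q2), ?_, ?_⟩
          · show val (i :: q1, q2) = ![n, m]
            rw [val_cons, hq, mulVec_Amat]
            simp [hstep]
          · rintro ⟨l, ε⟩ hr
            replace hr : val (l, ε) = ![n, m] := hr
            cases l with
            | nil =>
                exfalso
                rw [val_nil] at hr
                have e0 := congrFun hr 0
                have e1 := congrFun hr 1
                simp at e0 e1
                cases ε
                · simp at e1; exact hb2 ⟨by omega, by omega⟩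
                · simp at e1; exact hb3 ⟨by omega, by omega⟩
            | cons j t =>
                rw [val_cons, mulVec_Amat] at hr
                have hvt := val_valid t ε
                have e0 := congrFun hr 0
                have e1 := congrFun hr 1
                simp at e0 e1
                obtain ⟨hij, ha, hb⟩ := step_inj hvt.1 hvt.2.1 hva.1 hva.2.1
                  ((Prod.ext_iff.mpr ⟨e0, e1⟩).trans hstep.symm)
                have hv : val (t, ε) = ![a, b] := by
                  funext k; fin_cases k
                  · simpa using ha
                  · simpa using hb
                have heq := hq' (t, ε) hv
                obtain ⟨ht, hε⟩ := Prod.mk.inj heq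
                subst hij; subst ht; subst hε
                rfl

/-- every coprime pair `(n, m)` with `0 < n < m` and
`n ≢ m (mod 3)` can be written in exactly one way as
`(∏ᵢ A_{αᵢ}) · Sᵉ · (1,2)ᵗ = (n,m)ᵗ` with `αᵢ ∈ {1,…,5}` and `ε ∈ {0,1}`. -/
theorem modifiedSternBrocot_existsUnique (n m : ℤ) (hn : 0 < n) (hnm : n < m)
    (hg : Int.gcd n m = 1) (h3 : ¬ n ≡ m [ZMOD 3]) :
    ∃! p : List (Fin 5) × Bool,
      ((p.1.map Amat).prod * Smat ^ (cond p.2 1 0)).mulVec ![1, 2] = ![n, m] := by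
  have h3' : ¬ (3 ∣ m - n) := by rwa [Int.modEq_iff_dvd] at h3
  have hc : IsCoprime n m := Int.isCoprime_iff_gcd_eq_one.mpr hg
  exact main_lemma m.toNat n m (by omega) ⟨hn, hnm, hc, h3'⟩
end

section
/- Each of the matrices A₁ = [[1,0],[3,1]], A₂ = [[0,1],[1,3]], A₃ = [[1,1],[2,3]], A₄ = [[1,1],[3,2]], A₅ = [[0,1],[−1,2]] preserves the set of admissible pairs: if (n, m) are coprime integers with 0 < n < m and n ≢ m (mod 3), and (n', m')ᵗ = A_i · (n, m)ᵗ, then (n', m') are coprime, 0 < n' < m', and n' ≢ m' (mod 3). -/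
open Matrix

/-- each `Aᵢ` preserves the set of admissible pairs: coprime
`(n, m)` with `0 < n < m` and `n ≢ m (mod 3)`. -/
theorem Amat_preserves_admissible (i : Fin 5) (n m n' m' : ℤ)
    (hg : Int.gcd n m = 1) (hn : 0 < n) (hnm : n < m) (h3 : ¬ n ≡ m [ZMOD 3])
    (h : (Amat i).mulVec ![n, m] = ![n', m']) :
    Int.gcd n' m' = 1 ∧ 0 < n' ∧ n' < m' ∧ ¬ n' ≡ m' [ZMOD 3] := by
  rw [← Int.isCoprime_iff_gcd_eq_one] at hg
  obtain ⟨u, v, huv⟩ := hg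
  rw [show (3 : ℤ) = ((3 : ℕ) : ℤ) from rfl, Int.modEq_iff_dvd] at h3
  have h0 := congrFun h 0
  have h1 := congrFun h 1
  fin_cases i <;>
    simp [Amat, Matrix.mulVec, dotProduct, Fin.sum_univ_two] at h0 h1 <;>
    subst h0 <;> subst h1 <;>
    refine ⟨Int.isCoprime_iff_gcd_eq_one.mp ?_, by omega, by nlinarith, ?_⟩
  · exact ⟨u - 3 * v, v, by linear_combination huv⟩
  · intro hc; rw [show (3 : ℤ) = ((3 : ℕ) : ℤ) from rfl, Int.modEq_iff_dvd] at hc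
    omega
  · exact ⟨v - 3 * u, u, by linear_combination huv⟩
  · intro hc; rw [show (3 : ℤ) = ((3 : ℕ) : ℤ) from rfl, Int.modEq_iff_dvd] at hc
    omega
  · exact ⟨3 * u - 2 * v, v - u, by linear_combination huv⟩
  · intro hc; rw [show (3 : ℤ) = ((3 : ℕ) : ℤ) from rfl, Int.modEq_iff_dvd] at hc
    omega
  · exact ⟨3 * v - 2 * u, u - v, by linear_combination huv⟩
  · intro hc; rw [show (3 : ℤ) = ((3 : ℕ) : ℤ) from rfl, Int.modEq_iff_dvd] at hc
    omega
  · exact ⟨2 * u + v, -u, by linear_combination huv⟩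
  · intro hc; rw [show (3 : ℤ) = ((3 : ℕ) : ℤ) from rfl, Int.modEq_iff_dvd] at hc
    omega
end

section
/- Define T(n, m) = (n² + nm + m², m² + 2nm, n² + 2nm)ᵗ. Then for every pair of integers (n, m), if (n', m')ᵗ = A₁ · (n, m)ᵗ where A₁ = [[1,0],[3,1]], then T(n', m') = M₁ · T(n, m), where M₁ = [[7,−6,6],[8,−7,7],[4,−4,3]]. Explicitly, T(n, 3n+m) = (13n² + 7nm + m², 15n² + 8nm + m², 7n² + 2nm)ᵗ = M₁ · T(n, m). -/
/-! The three quadratic forms `n² + nm + m²`, `m² + 2nm`, `n² + 2nm` are a basis of the binary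
quadratic forms over `ℚ`, so the substitution `m ↦ 3n + m` acts on them linearly; `M₁` is the
matrix of that action, and it happens to have integer entries. -/

open Matrix

def T (n m : ℤ) : Fin 3 → ℤ :=
  ![n ^ 2 + n * m + m ^ 2, m ^ 2 + 2 * n * m, n ^ 2 + 2 * n * m]

def A1 : Matrix (Fin 2) (Fin 2) ℤ := !![1, 0; 3, 1]

def M1 : Matrix (Fin 3) (Fin 3) ℤ := !![7, -6, 6; 8, -7, 7; 4, -4, 3]

lemma A1_mulVec (n m : ℤ) : A1 *ᵥ ![n, m] = ![n, 3 * n + m] := by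
  ext i
  fin_cases i <;> simp [A1, mulVec, dotProduct, Fin.sum_univ_succ]

lemma M1_mulVec (a b c : ℤ) :
    M1 *ᵥ ![a, b, c] = ![7 * a - 6 * b + 6 * c, 8 * a - 7 * b + 7 * c, 4 * a - 4 * b + 3 * c] := by
  ext i
  fin_cases i <;> simp [M1, mulVec, dotProduct, Fin.sum_univ_succ] <;> ring

lemma T_three_mul_add (n m : ℤ) :
    T n (3 * n + m) =
      ![13 * n ^ 2 + 7 * n * m + m ^ 2, 15 * n ^ 2 + 8 * n * m + m ^ 2, 7 * n ^ 2 + 2 * n * m] := by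
  ext i
  fin_cases i <;> simp [T] <;> ring

lemma M1_mulVec_T (n m : ℤ) : M1 *ᵥ T n m = T n (3 * n + m) := by
  rw [T, M1_mulVec, T_three_mul_add]
  ext i
  fin_cases i <;> simp <;> ring

/-- for every `(n, m)`, if `(n', m')ᵗ = A₁ · (n, m)ᵗ` then
`T(n', m') = M₁ · T(n, m)`; explicitly `T(n, 3n + m) =
(13n² + 7nm + m², 15n² + 8nm + m², 7n² + 2nm)ᵗ = M₁ · T(n, m)`. -/
theorem T_A1_eq_M1_T :
    (∀ n m n' m' : ℤ, A1.mulVec ![n, m] = ![n', m'] →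
      T n' m' = M1.mulVec (T n m)) ∧
    (∀ n m : ℤ,
      T n (3 * n + m) =
        ![13 * n ^ 2 + 7 * n * m + m ^ 2, 15 * n ^ 2 + 8 * n * m + m ^ 2,
          7 * n ^ 2 + 2 * n * m] ∧
      T n (3 * n + m) = M1.mulVec (T n m)) := by
  refine ⟨fun n m n' m' h => ?_, fun n m => ⟨T_three_mul_add n m, (M1_mulVec_T n m).symm⟩⟩
  rw [A1_mulVec] at h
  obtain ⟨rfl, rfl⟩ : n = n' ∧ 3 * n + m = m' := by simpa using h
  exact (M1_mulVec_T n m).symm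
end

section
/- Define T(n, m) = (n² + nm + m², m² + 2nm, n² + 2nm)ᵗ, and let A₁ = [[1,0],[3,1]], A₂ = [[0,1],[1,3]], A₃ = [[1,1],[2,3]], A₄ = [[1,1],[3,2]], A₅ = [[0,1],[−1,2]], M₁ = [[7,−6,6],[8,−7,7],[4,−4,3]], M₂ = [[7,6,−6],[8,7,−7],[4,3,−4]], M₃ = [[7,6,0],[8,7,0],[4,3,1]], M₄ = [[7,0,6],[8,0,7],[4,1,3]], M₅ = [[7,0,−6],[8,0,−7],[4,1,−4]]. Then for every i ∈ {1,…,5} and all integers n, m, if (n', m')ᵗ = A_i · (n, m)ᵗ then T(n', m') = M_i · T(n, m). -/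
open Matrix

/-- The five matrices `M₁, …, M₅`. -/
def Mmat : Fin 5 → Matrix (Fin 3) (Fin 3) ℤ
  | 0 => !![7, -6, 6; 8, -7, 7; 4, -4, 3]
  | 1 => !![7, 6, -6; 8, 7, -7; 4, 3, -4]
  | 2 => !![7, 6, 0; 8, 7, 0; 4, 3, 1]
  | 3 => !![7, 0, 6; 8, 0, 7; 4, 1, 3]
  | 4 => !![7, 0, -6; 8, 0, -7; 4, 1, -4]

/-- for every `i ∈ {1,…,5}` and all integers `n, m`, if
`(n', m')ᵗ = Aᵢ · (n, m)ᵗ` then `T(n', m') = Mᵢ · T(n, m)`. -/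
theorem T_Amat_eq_Mmat_T (i : Fin 5) (n m n' m' : ℤ)
    (h : (Amat i).mulVec ![n, m] = ![n', m']) :
    T n' m' = (Mmat i).mulVec (T n m) := by
  have h0 := congrFun h 0
  have h1 := congrFun h 1
  fin_cases i <;>
    simp [Amat, mulVec, dotProduct, Fin.sum_univ_succ] at h0 h1 <;>
    subst h0 h1 <;>
    funext j <;> fin_cases j <;>
    simp [T, Mmat, mulVec, dotProduct, Fin.sum_univ_succ] <;> ring
end

section
/- Every primitive Pythagorean triple is obtained exactly once as B_{α₁}···B_{α_k} · (3,4,5)ᵗ for a unique finite (possibly empty) sequence α₁,…,α_k ∈ {1,2,3}, where B₁ = [[1,−2,2],[2,−1,2],[2,−2,3]], B₂ = [[1,2,2],[2,1,2],[2,2,3]], B₃ = [[−1,2,2],[−2,1,2],[−2,2,3]]. That is, for every triple of positive integers (a, b, c) with a² + b² = c² and gcd(a, b, c) = 1 there is exactly one such product P = B_{α₁}···B_{α_k} with P·(3,4,5)ᵗ ∈ {(a,b,c)ᵗ, (b,a,c)ᵗ}. -/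
open Matrix

/-- Berggren's three matrices `B₁, B₂, B₃`. -/
def Bmat : Fin 3 → Matrix (Fin 3) (Fin 3) ℤ
  | 0 => !![1, -2, 2; 2, -1, 2; 2, -2, 3]
  | 1 => !![1, 2, 2; 2, 1, 2; 2, 2, 3]
  | 2 => !![-1, 2, 2; -2, 1, 2; -2, 2, 3]

def f (l : List (Fin 3)) : Fin 3 → ℤ := ((l.map Bmat).prod).mulVec ![3,4,5]

lemma f_nil : f [] = ![3,4,5] := by simp [f]

lemma f_cons (i : Fin 3) (l : List (Fin 3)) : f (i :: l) = (Bmat i).mulVec (f l) := by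
  simp [f, Matrix.mulVec_mulVec]

lemma B0_app (v : Fin 3 → ℤ) : (Bmat 0).mulVec v =
    ![v 0 - 2*v 1 + 2*v 2, 2*v 0 - v 1 + 2*v 2, 2*v 0 - 2*v 1 + 3*v 2] := by
  funext i; fin_cases i <;>
    simp [Bmat, Matrix.mulVec, dotProduct, Fin.sum_univ_three] <;> ring_nf

lemma B1_app (v : Fin 3 → ℤ) : (Bmat 1).mulVec v =
    ![v 0 + 2*v 1 + 2*v 2, 2*v 0 + v 1 + 2*v 2, 2*v 0 + 2*v 1 + 3*v 2] := by
  funext i; fin_cases i <;>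
    simp [Bmat, Matrix.mulVec, dotProduct, Fin.sum_univ_three] <;> ring_nf

lemma B2_app (v : Fin 3 → ℤ) : (Bmat 2).mulVec v =
    ![-v 0 + 2*v 1 + 2*v 2, -2*v 0 + v 1 + 2*v 2, -2*v 0 + 2*v 1 + 3*v 2] := by
  funext i; fin_cases i <;>
    simp [Bmat, Matrix.mulVec, dotProduct, Fin.sum_univ_three] <;> ring_nf

lemma tripEq {x y z a b c : ℤ} : ![x,y,z] = ![a,b,c] ↔ x = a ∧ y = b ∧ z = c := by
  constructor
  · intro h; exact ⟨congrFun h 0, congrFun h 1, congrFun h 2⟩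
  · rintro ⟨rfl, rfl, rfl⟩; rfl

lemma tripEta (v : Fin 3 → ℤ) : v = ![v 0, v 1, v 2] := by funext i; fin_cases i <;> rfl

def Good (a b c : ℤ) : Prop :=
  0 < a ∧ 0 < b ∧ 0 < c ∧ a^2 + b^2 = c^2 ∧ Int.gcd a (Int.gcd b c) = 1 ∧ a % 2 = 1

lemma gcd_transfer {a b c a' b' c' : ℤ}
    (h1 : ∃ p q r : ℤ, a = p*a' + q*b' + r*c')
    (h2 : ∃ p q r : ℤ, b = p*a' + q*b' + r*c')
    (h3 : ∃ p q r : ℤ, c = p*a' + q*b' + r*c')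
    (hg : Int.gcd a (Int.gcd b c) = 1) : Int.gcd a' (Int.gcd b' c') = 1 := by
  set d : ℕ := Int.gcd a' (Int.gcd b' c') with hd
  have da : (d:ℤ) ∣ a' := Int.gcd_dvd_left _ _
  have dbc : (d:ℤ) ∣ (Int.gcd b' c' : ℤ) := Int.gcd_dvd_right _ _
  have db : (d:ℤ) ∣ b' := dvd_trans dbc (Int.gcd_dvd_left _ _)
  have dc : (d:ℤ) ∣ c' := dvd_trans dbc (Int.gcd_dvd_right _ _)
  have key : ∀ x : ℤ, (∃ p q r : ℤ, x = p*a' + q*b' + r*c') → (d:ℤ) ∣ x := by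
    rintro x ⟨p, q, r, rfl⟩
    exact dvd_add (dvd_add (da.mul_left p) (db.mul_left q)) (dc.mul_left r)
  have : (d:ℤ) ∣ Int.gcd a (Int.gcd b c) :=
    Int.dvd_coe_gcd (key a h1) (Int.dvd_coe_gcd (key b h2) (key c h3))
  rw [hg] at this
  exact Nat.dvd_one.mp (by exact_mod_cast this)

lemma triple_bounds {a b c : ℤ} (ha : 0 < a) (hb : 0 < b) (hc : 0 < c)
    (h : a^2 + b^2 = c^2) : a < c ∧ b < c ∧ c < a + b :=
  ⟨by nlinarith, by nlinarith, by nlinarith⟩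

lemma good_step0 {x y z : ℤ} (h : Good x y z) :
    Good (x-2*y+2*z) (2*x-y+2*z) (2*x-2*y+3*z) := by
  obtain ⟨hx, hy, hz, hp, hg, ho⟩ := h
  obtain ⟨h1, h2, h3⟩ := triple_bounds hx hy hz hp
  exact ⟨by linarith, by linarith, by linarith, by linear_combination hp,
    gcd_transfer ⟨1,2,-2, by ring⟩ ⟨-2,-1,2, by ring⟩ ⟨-2,-2,3, by ring⟩ hg, by omega⟩

lemma good_step1 {x y z : ℤ} (h : Good x y z) :
    Good (x+2*y+2*z) (2*x+y+2*z) (2*x+2*y+3*z) := by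
  obtain ⟨hx, hy, hz, hp, hg, ho⟩ := h
  obtain ⟨h1, h2, h3⟩ := triple_bounds hx hy hz hp
  exact ⟨by linarith, by linarith, by linarith, by linear_combination hp,
    gcd_transfer ⟨1,2,-2, by ring⟩ ⟨2,1,-2, by ring⟩ ⟨-2,-2,3, by ring⟩ hg, by omega⟩

lemma good_step2 {x y z : ℤ} (h : Good x y z) :
    Good (-x+2*y+2*z) (-2*x+y+2*z) (-2*x+2*y+3*z) := by
  obtain ⟨hx, hy, hz, hp, hg, ho⟩ := h
  obtain ⟨h1, h2, h3⟩ := triple_bounds hx hy hz hp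
  exact ⟨by linarith, by linarith, by linarith, by linear_combination hp,
    gcd_transfer ⟨-1,-2,2, by ring⟩ ⟨2,1,-2, by ring⟩ ⟨-2,-2,3, by ring⟩ hg, by omega⟩

lemma good_f (l : List (Fin 3)) : Good (f l 0) (f l 1) (f l 2) := by
  induction l with
  | nil =>
      rw [f_nil]
      refine ⟨by norm_num, by norm_num, by decide, by decide, ?_, by norm_num⟩
      decide
  | cons i l ih =>
      rw [f_cons]
      match i with
      | 0 => rw [B0_app]; simpa using good_step0 ih
      | 1 => rw [B1_app]; simpa using good_step1 ih
      | 2 => rw [B2_app]; simpa using good_step2 ih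

lemma pos_left {s t : ℤ} (ht : 0 < t) (h : 0 < s * t) : 0 < s := by nlinarith

lemma main_lemma_s15 : ∀ n : ℕ, ∀ a b c : ℤ, c ≤ n → Good a b c →
    ∃! l : List (Fin 3), f l = ![a,b,c] := by
  intro n
  induction n with
  | zero =>
      intro a b c hcn hG
      exact absurd hcn (by push_cast; linarith [hG.2.2.1])
  | succ n ih =>
    intro a b c hcn hG
    push_cast at hcn
    obtain ⟨ha, hb, hc, h, hg, hodd⟩ := hG
    obtain ⟨hac, hbc, hcab⟩ := triple_bounds ha hb hc h
    have hc'pos : 0 < -2*a - 2*b + 3*c := by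
      have key : (-2*a-2*b+3*c) * (2*a+2*b+3*c) = 4*(a-b)^2 + a^2 + b^2 := by
        linear_combination (-9)*h
      have hprod : 0 < (-2*a-2*b+3*c) * (2*a+2*b+3*c) := by rw [key]; nlinarith [sq_nonneg (a-b)]
      exact pos_left (by linarith) hprod
    have hcc : -2*a - 2*b + 3*c < c := by linarith
    rcases lt_trichotomy (4*a) (3*b) with h1 | h1 | h1
    · -- descend via B₀
      have ha' : 0 < a + 2*b - 2*c := by
        have key : (a+2*b-2*c) * (a+2*b+2*c) = a*(4*b-3*a) := by linear_combination 4*h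
        have hprod : 0 < (a+2*b-2*c) * (a+2*b+2*c) := by rw [key]; exact mul_pos ha (by linarith)
        exact pos_left (by linarith) hprod
      have hb' : 0 < -2*a - b + 2*c := by
        have key : (-2*a-b+2*c) * (2*a+b+2*c) = b*(3*b-4*a) := by linear_combination (-4)*h
        have hprod : 0 < (-2*a-b+2*c) * (2*a+b+2*c) := by rw [key]; exact mul_pos hb (by linarith)
        exact pos_left (by linarith) hprod
      obtain ⟨l', hl', hu'⟩ := ih (a+2*b-2*c) (-2*a-b+2*c) (-2*a-2*b+3*c) (by omega)
        ⟨ha', hb', hc'pos, by linear_combination h,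
          gcd_transfer ⟨1,-2,2, by ring⟩ ⟨2,-1,2, by ring⟩ ⟨2,-2,3, by ring⟩ hg, by omega⟩
      refine ⟨0 :: l', ?_, ?_⟩
      · show f (0 :: l') = ![a,b,c]
        rw [f_cons, hl', B0_app]
        simp only [Matrix.cons_val_zero, Matrix.cons_val_one, Matrix.head_cons,
          Matrix.cons_val_two, Matrix.tail_cons]
        rw [tripEq]
        refine ⟨by ring, by ring, by ring⟩
      · intro l hl
        match l with
        | [] => exfalso; rw [f_nil, tripEq] at hl; omega
        | i :: l'' =>
            rw [f_cons] at hl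
            obtain ⟨hx, hy, hz, hp, -, -⟩ := good_f l''
            obtain ⟨hxz, hyz, hzxy⟩ := triple_bounds hx hy hz hp
            match i with
            | 0 =>
                rw [B0_app, tripEq] at hl
                have hr : l'' = l' := by
                  apply hu'
                  show f l'' = _
                  rw [tripEta (f l''), tripEq]
                  refine ⟨by omega, by omega, by omega⟩
                rw [hr]
            | 1 => exfalso; rw [B1_app, tripEq] at hl; omega
            | 2 => exfalso; rw [B2_app, tripEq] at hl; omega
    · -- root (3,4,5)
      obtain ⟨k, hk⟩ : (3:ℤ) ∣ a := by omega
      have hbk : b = 4*k := by omega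
      have hk0 : 0 < k := by omega
      have h5 : (c - 5*k) * (c + 5*k) = 0 := by
        linear_combination (-1)*h + (a+3*k)*hk + (b+4*k)*hbk
      have hck : c = 5*k := by
        rcases mul_eq_zero.mp h5 with h6 | h6 <;> omega
      have kdvd : k ∣ ((Int.gcd a (Int.gcd b c) : ℕ) : ℤ) :=
        Int.dvd_coe_gcd ⟨3, by omega⟩ (Int.dvd_coe_gcd ⟨4, by omega⟩ ⟨5, by omega⟩)
      rw [hg] at kdvd
      have hk1 : k = 1 := by
        have := Int.le_of_dvd one_pos (by exact_mod_cast kdvd)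
        omega
      refine ⟨[], ?_, ?_⟩
      · show f [] = ![a,b,c]
        rw [f_nil, tripEq]; refine ⟨by omega, by omega, by omega⟩
      · intro l hl
        match l with
        | [] => rfl
        | i :: l'' =>
            exfalso
            rw [f_cons] at hl
            obtain ⟨hx, hy, hz, hp, -, -⟩ := good_f l''
            obtain ⟨hxz, hyz, hzxy⟩ := triple_bounds hx hy hz hp
            match i with
            | 0 => rw [B0_app, tripEq] at hl; omega
            | 1 => rw [B1_app, tripEq] at hl; omega
            | 2 => rw [B2_app, tripEq] at hl; omega
    · rcases lt_trichotomy (3*a) (4*b) with h2 | h2 | h2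
      · -- descend via B₁
        have ha' : 0 < a + 2*b - 2*c := by
          have key : (a+2*b-2*c) * (a+2*b+2*c) = a*(4*b-3*a) := by linear_combination 4*h
          have hprod : 0 < (a+2*b-2*c) * (a+2*b+2*c) := by rw [key]; exact mul_pos ha (by linarith)
          exact pos_left (by linarith) hprod
        have hb' : 0 < 2*a + b - 2*c := by
          have key : (2*a+b-2*c) * (2*a+b+2*c) = b*(4*a-3*b) := by linear_combination 4*h
          have hprod : 0 < (2*a+b-2*c) * (2*a+b+2*c) := by rw [key]; exact mul_pos hb (by linarith)
          exact pos_left (by linarith) hprod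
        obtain ⟨l', hl', hu'⟩ := ih (a+2*b-2*c) (2*a+b-2*c) (-2*a-2*b+3*c) (by omega)
          ⟨ha', hb', hc'pos, by linear_combination h,
            gcd_transfer ⟨1,2,2, by ring⟩ ⟨2,1,2, by ring⟩ ⟨2,2,3, by ring⟩ hg, by omega⟩
        refine ⟨1 :: l', ?_, ?_⟩
        · show f (1 :: l') = ![a,b,c]
          rw [f_cons, hl', B1_app]
          simp only [Matrix.cons_val_zero, Matrix.cons_val_one, Matrix.head_cons,
            Matrix.cons_val_two, Matrix.tail_cons]
          rw [tripEq]
          refine ⟨by ring, by ring, by ring⟩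
        · intro l hl
          match l with
          | [] => exfalso; rw [f_nil, tripEq] at hl; omega
          | i :: l'' =>
              rw [f_cons] at hl
              obtain ⟨hx, hy, hz, hp, -, -⟩ := good_f l''
              obtain ⟨hxz, hyz, hzxy⟩ := triple_bounds hx hy hz hp
              match i with
              | 0 => exfalso; rw [B0_app, tripEq] at hl; omega
              | 1 =>
                  rw [B1_app, tripEq] at hl
                  have hr : l'' = l' := by
                    apply hu'
                    show f l'' = _
                    rw [tripEta (f l''), tripEq]
                    refine ⟨by omega, by omega, by omega⟩
                  rw [hr]
              | 2 => exfalso; rw [B2_app, tripEq] at hl; omega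
      · exact absurd h2 (by omega)
      · -- descend via B₂
        have ha' : 0 < -a - 2*b + 2*c := by
          have key : (-a-2*b+2*c) * (a+2*b+2*c) = a*(3*a-4*b) := by linear_combination (-4)*h
          have hprod : 0 < (-a-2*b+2*c) * (a+2*b+2*c) := by rw [key]; exact mul_pos ha (by linarith)
          exact pos_left (by linarith) hprod
        have hb' : 0 < 2*a + b - 2*c := by
          have key : (2*a+b-2*c) * (2*a+b+2*c) = b*(4*a-3*b) := by linear_combination 4*h
          have hprod : 0 < (2*a+b-2*c) * (2*a+b+2*c) := by rw [key]; exact mul_pos hb (by linarith)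
          exact pos_left (by linarith) hprod
        obtain ⟨l', hl', hu'⟩ := ih (-a-2*b+2*c) (2*a+b-2*c) (-2*a-2*b+3*c) (by omega)
          ⟨ha', hb', hc'pos, by linear_combination h,
            gcd_transfer ⟨-1,2,2, by ring⟩ ⟨-2,1,2, by ring⟩ ⟨-2,2,3, by ring⟩ hg, by omega⟩
        refine ⟨2 :: l', ?_, ?_⟩
        · show f (2 :: l') = ![a,b,c]
          rw [f_cons, hl', B2_app]
          simp only [Matrix.cons_val_zero, Matrix.cons_val_one, Matrix.head_cons,
            Matrix.cons_val_two, Matrix.tail_cons]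
          rw [tripEq]
          refine ⟨by ring, by ring, by ring⟩
        · intro l hl
          match l with
          | [] => exfalso; rw [f_nil, tripEq] at hl; omega
          | i :: l'' =>
              rw [f_cons] at hl
              obtain ⟨hx, hy, hz, hp, -, -⟩ := good_f l''
              obtain ⟨hxz, hyz, hzxy⟩ := triple_bounds hx hy hz hp
              match i with
              | 0 => exfalso; rw [B0_app, tripEq] at hl; omega
              | 1 => exfalso; rw [B1_app, tripEq] at hl; omega
              | 2 =>
                  rw [B2_app, tripEq] at hl
                  have hr : l'' = l' := by
                    apply hu'
                    show f l'' = _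
                    rw [tripEta (f l''), tripEq]
                    refine ⟨by omega, by omega, by omega⟩
                  rw [hr]

lemma odd_sq_mod_four {a : ℤ} (h : a % 2 = 1) : a^2 % 4 = 1 := by
  obtain ⟨m, hm⟩ : ∃ m, a = 2*m+1 := ⟨a/2, by omega⟩
  subst hm
  have : (2*m+1)^2 = 4*(m^2+m)+1 := by ring
  omega

lemma even_sq_mod_four {a : ℤ} (h : a % 2 = 0) : a^2 % 4 = 0 := by
  obtain ⟨m, hm⟩ : ∃ m, a = 2*m := ⟨a/2, by omega⟩
  subst hm
  have : (2*m)^2 = 4*m^2 := by ring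
  omega

/-- Berggren, 1934: every primitive Pythagorean triple `(a,b,c)`
(considered up to swapping the legs `a` and `b`) is obtained exactly once as
`B_{α₁} ⋯ B_{α_k} · (3,4,5)ᵗ` for a unique finite word `α₁,…,α_k ∈ {1,2,3}`. -/
theorem berggren (a b c : ℤ) (ha : 0 < a) (hb : 0 < b) (hc : 0 < c)
    (h : a ^ 2 + b ^ 2 = c ^ 2) (hg : Int.gcd a (Int.gcd b c) = 1) :
    ∃! l : List (Fin 3),
      (l.map Bmat).prod.mulVec ![3, 4, 5] = ![a, b, c] ∨
      (l.map Bmat).prod.mulVec ![3, 4, 5] = ![b, a, c] := by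
  have hpar : (a % 2 = 1 ∧ b % 2 = 0) ∨ (a % 2 = 0 ∧ b % 2 = 1) := by
    rcases Int.emod_two_eq a with ha2 | ha2 <;> rcases Int.emod_two_eq b with hb2 | hb2
    · exfalso
      have hc2 : c % 2 = 0 := by
        rcases Int.emod_two_eq c with hc2 | hc2
        · exact hc2
        · exfalso
          have e1 := even_sq_mod_four ha2
          have e2 := even_sq_mod_four hb2
          have e3 := odd_sq_mod_four hc2
          have h' := h
          generalize a^2 = A at e1 h'
          generalize b^2 = B at e2 h'
          generalize c^2 = C at e3 h'
          omega
      have h2 : (2:ℤ) ∣ ((Int.gcd a (Int.gcd b c) : ℕ) : ℤ) :=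
        Int.dvd_coe_gcd (by omega) (Int.dvd_coe_gcd (by omega) (by omega))
      rw [hg] at h2
      norm_num at h2
    · exact Or.inr ⟨ha2, hb2⟩
    · exact Or.inl ⟨ha2, hb2⟩
    · exfalso
      have e1 := odd_sq_mod_four ha2
      have e2 := odd_sq_mod_four hb2
      have e3 : c^2 % 4 = 0 ∨ c^2 % 4 = 1 := by
        rcases Int.emod_two_eq c with hc2 | hc2
        · exact Or.inl (even_sq_mod_four hc2)
        · exact Or.inr (odd_sq_mod_four hc2)
      have h' := h
      generalize a^2 = A at e1 h'
      generalize b^2 = B at e2 h'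
      generalize c^2 = C at e3 h'
      omega
  rcases hpar with ⟨ha2, hb2⟩ | ⟨ha2, hb2⟩
  · obtain ⟨l, hl, hu⟩ := main_lemma_s15 c.toNat a b c (by omega) ⟨ha, hb, hc, h, hg, ha2⟩
    refine ⟨l, Or.inl hl, ?_⟩
    intro l' hl'
    rcases hl' with h' | h'
    · exact hu l' h'
    · exfalso
      have h0 := (good_f l').2.2.2.2.2
      have hb0 : f l' 0 = b := by
        have := congrFun h' 0
        simpa [f] using this
      omega
  · obtain ⟨l, hl, hu⟩ := main_lemma_s15 c.toNat b a c (by omega)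
      ⟨hb, ha, hc, by linear_combination h,
        gcd_transfer ⟨0,1,0, by ring⟩ ⟨1,0,0, by ring⟩ ⟨0,0,1, by ring⟩ hg, hb2⟩
    refine ⟨l, Or.inr hl, ?_⟩
    intro l' hl'
    rcases hl' with h' | h'
    · exfalso
      have h0 := (good_f l').2.2.2.2.2
      have ha0 : f l' 0 = a := by
        have := congrFun h' 0
        simpa [f] using this
      omega
    · exact hu l' h'
end
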